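/- Let m ≥ 1 and let V₁, …, V_m be finite-dimensional vector spaces over ℚ, with V = V₁ × ⋯ × V_m, and for each i let φᵢ : ℚ(Vᵢ) → ℚ(V) be the field embedding induced by the canonical inclusion Vᵢ ↪ V. For each i, let Σᵢ ⊆ Vᵢ be a set which is the union of a finite pairwise-disjoint family of simple sectors with data (x⁽ⁱ'ʲ⁾; e⁽ⁱ'ʲ⁾), j = 1, …, kᵢ. Suppose the product Σ₁ × ⋯ × Σ_m ⊆ V is the union of a finite pairwise-disjoint family of simple sectors in V with data (y⁽ᵗ⁾; f⁽ᵗ⁾), t = 1, …, K. Then ∑_{t=1}^{K} S(y⁽ᵗ⁾; f⁽ᵗ⁾) = ∏_{i=1}^{m} φᵢ( ∑_{j=1}^{kᵢ} S(x⁽ⁱ'ʲ⁾; e⁽ⁱ'ʲ⁾) ) in ℚ(V). -/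

import Mathlib

/-- The group algebra `ℚ[V]` of a ℚ-vector space `V` is an integral domain
(it has no zero divisors since `V` has unique sums, being torsion-free). -/
instance (V : Type*) [AddCommGroup V] [Module ℚ V] : IsDomain (AddMonoidAlgebra ℚ V) :=
  NoZeroDivisors.to_isDomain _

/-- The simple sector associated to a datum `(x₀; e₁, …, e_m)`:
the set `{x₀ + a₁e₁ + ⋯ + a_m e_m : aᵢ ∈ ℤ, aᵢ ≥ 0}`. -/
def simpleSector {V : Type*} [AddCommGroup V] [Module ℚ V] {m : ℕ}
    (x₀ : V) (e : Fin m → V) : Set V :=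
  {y | ∃ a : Fin m → ℕ, y = x₀ + ∑ i, a i • e i}

/-- The element `S(x₀; e) = e^{x₀} / ∏ᵢ (1 − e^{eᵢ})` of the fraction field `ℚ(V)`
of the group algebra `ℚ[V]` associated to a simple-sector datum `(x₀; e₁, …, e_m)`. -/
noncomputable def Sfrac {V : Type*} [AddCommGroup V] [Module ℚ V] {m : ℕ}
    (x₀ : V) (e : Fin m → V) : FractionRing (AddMonoidAlgebra ℚ V) :=
  algebraMap (AddMonoidAlgebra ℚ V) (FractionRing (AddMonoidAlgebra ℚ V))
      (AddMonoidAlgebra.single x₀ 1) /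
    ∏ i, (1 - algebraMap (AddMonoidAlgebra ℚ V) (FractionRing (AddMonoidAlgebra ℚ V))
      (AddMonoidAlgebra.single (e i) 1))

/-!
Let `ℚ[V]` act on arbitrary functions `V → ℚ` by convolution. For linearly independent `e`, the
element `∏ᵢ (1 - e^{eᵢ})` sends the indicator of the sector `(x₀; e)` to the delta function at `x₀`
(peel off one generator at a time: the sector is the disjoint union of its sub-sector without `eᵢ`
and its own translate by `eᵢ`). So clearing the denominators of the `S`-sum of a disjoint sector
decomposition of a set `Σ` by a common multiple `D` yields the element of `ℚ[V]` whose coefficient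
function is `D ⋆ 𝟙_Σ`; in particular the `S`-sum depends only on `Σ`. The products of the sectors
of the factors form one such decomposition of `Σ₁ × ⋯ × Σ_m`, and its `S`-sum is visibly the
product of the `S`-sums of the factors.
-/

open AddMonoidAlgebra Finset Function

namespace AddMonoidAlgebra

variable {k V : Type*} [CommSemiring k] [AddCommGroup V]

/-- Convolution with functions `V → k` that need not be finitely supported:
`translateAction p g v = ∑ w, p w * g (v - w)`. -/
noncomputable def translateAction : k[V] →ₐ[k] Module.End k (V → k) :=
  lift k (Module.End k (V → k)) V
    { toFun := fun w => LinearMap.funLeft k k (· - Multiplicative.toAdd w)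
      map_one' := LinearMap.ext fun g => funext fun v => by simp [LinearMap.funLeft]
      map_mul' := fun w₁ w₂ => LinearMap.ext fun g => funext fun v => by
        simp [Module.End.mul_apply, LinearMap.funLeft, sub_sub] }

theorem translateAction_single_apply (w : V) (c : k) (g : V → k) (v : V) :
    translateAction (single w c) g v = c * g (v - w) := by
  simp [translateAction, LinearMap.funLeft]

theorem translateAction_apply_single_zero [DecidableEq V] (p : k[V]) :
    translateAction p (Pi.single 0 1) = ⇑p.coeff := by
  induction p using AddMonoidAlgebra.induction_linear with
  | zero => simp
  | add p q hp hq => simp [hp, hq]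
  | single w c =>
    ext v
    simp [translateAction_single_apply, Pi.single_apply, Finsupp.single_apply, sub_eq_zero,
      eq_comm]

theorem translateAction_single_one_single_zero [DecidableEq V] (w : V) :
    translateAction (single w 1) (Pi.single 0 1) = (Pi.single w 1 : V → k) := by
  rw [translateAction_apply_single_zero, coeff_single, Finsupp.single_eq_pi_single]

theorem translateAction_single_zero_injective [DecidableEq V] :
    Function.Injective fun p : k[V] => translateAction p (Pi.single 0 1) := by
  intro p q h
  simp only [translateAction_apply_single_zero] at h
  exact coeff_injective (DFunLike.coe_injective h)

end AddMonoidAlgebra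

section Sector

variable {V ι : Type*} [AddCommGroup V]

def sectorOn (s : Finset ι) (x₀ : V) (E : ι → V) : Set V :=
  {v | ∃ a : ι → ℕ, v = x₀ + ∑ i ∈ s, a i • E i}

theorem mem_sectorOn_insert [DecidableEq ι] {s : Finset ι} {i : ι} (hi : i ∉ s) {x₀ v : V}
    {E : ι → V} : v ∈ sectorOn (insert i s) x₀ E ↔ ∃ c : ℕ, v - c • E i ∈ sectorOn s x₀ E := by
  constructor
  · rintro ⟨a, rfl⟩
    exact ⟨a i, a, by rw [sum_insert hi]; abel⟩
  · rintro ⟨c, a, ha⟩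
    refine ⟨Function.update a i c, ?_⟩
    rw [sum_insert hi, Function.update_self, sum_congr rfl fun j hj => by
      rw [Function.update_of_ne (ne_of_mem_of_not_mem hj hi)], eq_add_of_sub_eq ha]
    abel

theorem mem_sectorOn_insert_iff_mem_or_sub_mem [DecidableEq ι] {s : Finset ι} {i : ι}
    (hi : i ∉ s) {x₀ v : V} {E : ι → V} :
    v ∈ sectorOn (insert i s) x₀ E ↔
      v ∈ sectorOn s x₀ E ∨ v - E i ∈ sectorOn (insert i s) x₀ E := by
  simp only [mem_sectorOn_insert hi]
  constructor
  · rintro ⟨_ | c, hc⟩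
    · exact .inl (by simpa using hc)
    · exact .inr ⟨c, by rwa [sub_sub, ← succ_nsmul']⟩
  · rintro (hv | ⟨c, hc⟩)
    · exact ⟨0, by simpa using hv⟩
    · exact ⟨c + 1, by rwa [succ_nsmul', ← sub_sub]⟩

theorem sub_notMem_sectorOn_insert [Module ℚ V] [DecidableEq ι] {E : ι → V}
    (hE : LinearIndependent ℚ E) {s : Finset ι} {i : ι} (hi : i ∉ s) {x₀ v : V}
    (hv : v ∈ sectorOn s x₀ E) : v - E i ∉ sectorOn (insert i s) x₀ E := by
  rw [mem_sectorOn_insert hi]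
  rintro ⟨c, b, hb⟩
  obtain ⟨a, rfl⟩ := hv
  have hspan : ∀ a : ι → ℕ, ∑ j ∈ s, a j • E j ∈ Submodule.span ℚ (E '' s) := fun a =>
    Submodule.sum_mem _ fun j hj =>
      Submodule.smul_of_tower_mem _ _ (Submodule.subset_span (Set.mem_image_of_mem E hj))
  have hc : ((c + 1 : ℕ) : ℚ) • E i ∈ Submodule.span ℚ (E '' s) := by
    rw [Nat.cast_smul_eq_nsmul,
      show (c + 1) • E i = ∑ j ∈ s, a j • E j - ∑ j ∈ s, b j • E j by
        linear_combination (norm := module) -hb]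
    exact sub_mem (hspan a) (hspan b)
  exact hE.notMem_span_image hi ((Submodule.smul_mem_iff _ (by positivity)).mp hc)

end Sector

theorem translateAction_prod_indicator_sectorOn {k V ι : Type*} [CommRing k] [AddCommGroup V]
    [Module ℚ V] [DecidableEq V] {E : ι → V} (hE : LinearIndependent ℚ E) (s : Finset ι)
    (x₀ : V) :
    translateAction (∏ i ∈ s, (1 - single (E i) (1 : k))) ((sectorOn s x₀ E).indicator 1) =
      Pi.single x₀ 1 := by
  classical
  induction s using Finset.induction_on with
  | empty =>
    have hsingleton : sectorOn ∅ x₀ E = {x₀} := by ext v; simp [sectorOn]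
    rw [prod_empty, map_one, hsingleton, Set.indicator_singleton]
    rfl
  | insert i s hi ih =>
    rw [prod_insert hi, mul_comm, map_mul, Module.End.mul_apply, ← ih]
    congr 1
    ext v
    rw [map_sub, map_one, LinearMap.sub_apply, Pi.sub_apply, Module.End.one_apply,
      translateAction_single_apply, one_mul]
    by_cases hv : v ∈ sectorOn s x₀ E
    · rw [Set.indicator_of_mem ((mem_sectorOn_insert_iff_mem_or_sub_mem hi).2 (.inl hv)),
        Set.indicator_of_notMem (sub_notMem_sectorOn_insert hE hi hv), Set.indicator_of_mem hv]
      simp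
    · rw [Set.indicator_of_notMem hv]
      by_cases hv' : v - E i ∈ sectorOn (insert i s) x₀ E
      · rw [Set.indicator_of_mem ((mem_sectorOn_insert_iff_mem_or_sub_mem hi).2 (.inr hv')),
          Set.indicator_of_mem hv', Pi.one_apply, Pi.one_apply, sub_self]
      · have hv_notMem : v ∉ sectorOn (insert i s) x₀ E := fun h =>
          ((mem_sectorOn_insert_iff_mem_or_sub_mem hi).1 h).elim hv hv'
        rw [Set.indicator_of_notMem hv_notMem, Set.indicator_of_notMem hv', sub_self]

section SectorFrac

variable {V ι : Type*} [AddCommGroup V] [Fintype ι]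

noncomputable def sectorDenom (E : ι → V) : ℚ[V] :=
  ∏ i, (1 - single (E i) 1)

theorem algebraMap_sectorDenom (E : ι → V) :
    algebraMap ℚ[V] (FractionRing ℚ[V]) (sectorDenom E) =
      ∏ i, (1 - algebraMap ℚ[V] (FractionRing ℚ[V]) (single (E i) 1)) := by
  simp [sectorDenom]

variable [Module ℚ V]

noncomputable def sectorFrac (x₀ : V) (E : ι → V) : FractionRing ℚ[V] :=
  algebraMap ℚ[V] (FractionRing ℚ[V]) (single x₀ 1) /
    algebraMap ℚ[V] (FractionRing ℚ[V]) (sectorDenom E)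

theorem simpleSector_eq_sectorOn {m : ℕ} (x₀ : V) (e : Fin m → V) :
    simpleSector x₀ e = sectorOn univ x₀ e :=
  rfl

theorem Sfrac_eq_sectorFrac {m : ℕ} (x₀ : V) (e : Fin m → V) : Sfrac x₀ e = sectorFrac x₀ e := by
  rw [sectorFrac, algebraMap_sectorDenom]
  rfl

theorem sectorDenom_ne_zero {E : ι → V} (hE : LinearIndependent ℚ E) : sectorDenom E ≠ 0 :=
  prod_ne_zero_iff.2 fun i _ => sub_ne_zero.2 fun h =>
    hE.ne_zero i ((single_left_inj one_ne_zero).1 (one_def.symm.trans h)).symm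

theorem algebraMap_sectorDenom_ne_zero {E : ι → V} (hE : LinearIndependent ℚ E) :
    algebraMap ℚ[V] (FractionRing ℚ[V]) (sectorDenom E) ≠ 0 :=
  (map_ne_zero_iff _ (IsFractionRing.injective _ _)).2 (sectorDenom_ne_zero hE)

theorem sectorFrac_mul_algebraMap {E : ι → V} (hE : LinearIndependent ℚ E) (x₀ : V) (r : ℚ[V]) :
    sectorFrac x₀ E * algebraMap ℚ[V] (FractionRing ℚ[V]) (sectorDenom E * r) =
      algebraMap ℚ[V] (FractionRing ℚ[V]) (single x₀ 1 * r) := by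
  have := algebraMap_sectorDenom_ne_zero hE
  rw [sectorFrac, map_mul, map_mul]
  field_simp

end SectorFrac

section Decomposition

variable {V τ τ' : Type*} [AddCommGroup V] [Module ℚ V] [Fintype τ] [Fintype τ']
  {ι : τ → Type*} [∀ t, Fintype (ι t)] {ι' : τ' → Type*} [∀ t, Fintype (ι' t)]

theorem translateAction_single_mul_single_zero [DecidableEq V] {κ : Type*} [Fintype κ]
    {E : κ → V} (hE : LinearIndependent ℚ E) (x₀ : V) (r : ℚ[V]) :
    translateAction (single x₀ 1 * r) (Pi.single 0 1) =
      translateAction (sectorDenom E * r) ((sectorOn univ x₀ E).indicator 1) := by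
  rw [mul_comm (single x₀ 1), map_mul, Module.End.mul_apply,
    translateAction_single_one_single_zero, ← translateAction_prod_indicator_sectorOn hE,
    ← Module.End.mul_apply, ← map_mul, mul_comm]
  rfl

theorem exists_sum_sectorFrac_mul_eq [DecidableEq V] {y : τ → V} {f : ∀ t, ι t → V}
    (hf : ∀ t, LinearIndependent ℚ (f t))
    (hdf : Pairwise (Disjoint on fun t => sectorOn univ (y t) (f t)))
    {D : ℚ[V]} (hD : ∀ t, sectorDenom (f t) ∣ D) :
    ∃ A : ℚ[V], (∑ t, sectorFrac (y t) (f t)) * algebraMap ℚ[V] (FractionRing ℚ[V]) D =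
        algebraMap ℚ[V] (FractionRing ℚ[V]) A ∧
      translateAction A (Pi.single 0 1) =
        translateAction D ((⋃ t, sectorOn univ (y t) (f t)).indicator 1) := by
  choose r hr using hD
  refine ⟨∑ t, single (y t) 1 * r t, ?_, ?_⟩
  · rw [sum_mul, map_sum]
    exact sum_congr rfl fun t _ => by rw [hr t, sectorFrac_mul_algebraMap (hf t)]
  · have hind : (⋃ t, sectorOn univ (y t) (f t)).indicator (1 : V → ℚ) =
        ∑ t, (sectorOn univ (y t) (f t)).indicator 1 := by
      simpa [Finset.sum_fn] using Finset.indicator_biUnion univ _ (f := (1 : V → ℚ))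
        (by simpa using hdf.pairwiseDisjoint Set.univ)
    rw [hind, map_sum, map_sum, LinearMap.sum_apply]
    exact sum_congr rfl fun t _ => by
      rw [translateAction_single_mul_single_zero (hf t), ← hr t]

theorem sum_sectorFrac_eq_of_iUnion_eq {y : τ → V} {f : ∀ t, ι t → V}
    {y' : τ' → V} {f' : ∀ t, ι' t → V}
    (hf : ∀ t, LinearIndependent ℚ (f t))
    (hdf : Pairwise (Disjoint on fun t => sectorOn univ (y t) (f t)))
    (hf' : ∀ t, LinearIndependent ℚ (f' t))
    (hdf' : Pairwise (Disjoint on fun t => sectorOn univ (y' t) (f' t)))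
    (h : (⋃ t, sectorOn univ (y t) (f t)) = ⋃ t, sectorOn univ (y' t) (f' t)) :
    ∑ t, sectorFrac (y t) (f t) = ∑ t, sectorFrac (y' t) (f' t) := by
  classical
  set D := (∏ t, sectorDenom (f t)) * ∏ t, sectorDenom (f' t)
  obtain ⟨A, hA, hTA⟩ := exists_sum_sectorFrac_mul_eq hf hdf (D := D) fun t =>
    (dvd_prod_of_mem _ (mem_univ t)).mul_right _
  obtain ⟨A', hA', hTA'⟩ := exists_sum_sectorFrac_mul_eq hf' hdf' (D := D) fun t =>
    (dvd_prod_of_mem _ (mem_univ t)).mul_left _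
  have hAA' : A = A' := translateAction_single_zero_injective (by simp only [hTA, hTA', h])
  have hD : algebraMap ℚ[V] (FractionRing ℚ[V]) D ≠ 0 := by
    simp only [D, map_mul, map_prod]
    exact mul_ne_zero (prod_ne_zero_iff.2 fun t _ => algebraMap_sectorDenom_ne_zero (hf t))
      (prod_ne_zero_iff.2 fun t _ => algebraMap_sectorDenom_ne_zero (hf' t))
  exact mul_right_cancel₀ hD (by rw [hA, hA', hAA'])

end Decomposition

section Product

theorem pairwise_disjoint_univ_pi {β : Type*} {α ι : β → Type*} {S : ∀ b, ι b → Set (α b)}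
    (h : ∀ b, Pairwise (Disjoint on S b)) :
    Pairwise (Disjoint on fun c : ∀ b, ι b => Set.univ.pi fun b => S b (c b)) := fun c c' hcc' => by
  obtain ⟨b, hb⟩ := Function.ne_iff.1 hcc'
  exact Set.disjoint_univ_pi.2 ⟨b, h b hb⟩

theorem prod_sectorFrac {V β : Type*} [AddCommGroup V] [Module ℚ V] [Fintype β]
    {κ : β → Type*} [∀ b, Fintype (κ b)] (x : β → V) (E : ∀ b, κ b → V) :
    ∏ b, sectorFrac (x b) (E b) = sectorFrac (∑ b, x b) fun σ : Σ b, κ b => E σ.1 σ.2 := by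
  simp only [sectorFrac, sectorDenom]
  rw [prod_div_distrib, ← map_prod, ← map_prod, prod_single, prod_const_one, Fintype.prod_sigma]

theorem map_sectorFrac {V W ι : Type*} [AddCommGroup V] [Module ℚ V] [AddCommGroup W]
    [Module ℚ W] [Fintype ι] (φ : FractionRing ℚ[V] →+* FractionRing ℚ[W]) (g : V → W)
    (hφ : ∀ v, φ (algebraMap ℚ[V] (FractionRing ℚ[V]) (single v 1)) =
      algebraMap ℚ[W] (FractionRing ℚ[W]) (single (g v) 1))
    (x₀ : V) (E : ι → V) : φ (sectorFrac x₀ E) = sectorFrac (g x₀) (g ∘ E) := by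
  simp [sectorFrac, map_div₀, algebraMap_sectorDenom, hφ]

theorem univ_pi_sectorOn_univ {β : Type*} [Fintype β] [DecidableEq β] {V : β → Type*}
    [∀ b, AddCommGroup (V b)] {κ : β → Type*} [∀ b, Fintype (κ b)] (x : ∀ b, V b)
    (E : ∀ b, κ b → V b) :
    Set.univ.pi (fun b => sectorOn univ (x b) (E b)) =
      sectorOn univ x fun σ : Σ b, κ b => Pi.single σ.1 (E σ.1 σ.2) := by
  have hsum (a : (Σ b, κ b) → ℕ) (b : β) :
      (∑ σ : Σ b, κ b, a σ • (Pi.single σ.1 (E σ.1 σ.2) : ∀ b, V b)) b =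
        ∑ l, a ⟨b, l⟩ • E b l := by
    simp only [Fintype.sum_sigma, Finset.sum_apply, Pi.smul_apply]
    rw [Fintype.sum_eq_single b fun b' hb' => sum_eq_zero fun l _ => by
      rw [Pi.single_eq_of_ne (Ne.symm hb'), smul_zero]]
    simp only [Pi.single_eq_same]
  ext v
  simp only [Set.mem_univ_pi, sectorOn, Set.mem_ofPred_eq]
  constructor
  · intro h
    choose a ha using h
    exact ⟨fun σ => a σ.1 σ.2, funext fun b => by rw [ha b, Pi.add_apply, hsum]⟩
  · rintro ⟨a, rfl⟩ b
    exact ⟨fun l => a ⟨b, l⟩, by rw [Pi.add_apply, hsum]⟩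

theorem sum_sectorFrac_eq_prod_of_iUnion_eq_univ_pi {β : Type*} [Fintype β] [DecidableEq β]
    {V : β → Type*} [∀ b, AddCommGroup (V b)] [∀ b, Module ℚ (V b)]
    {κ : β → Type*} [∀ b, Fintype (κ b)] {ι : ∀ b, κ b → Type*} [∀ b j, Fintype (ι b j)]
    {x : ∀ b, κ b → V b} {E : ∀ b j, ι b j → V b} (hE : ∀ b j, LinearIndependent ℚ (E b j))
    (hd : ∀ b, Pairwise (Disjoint on fun j => sectorOn univ (x b j) (E b j)))
    {τ : Type*} [Fintype τ] {ι' : τ → Type*} [∀ t, Fintype (ι' t)]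
    {y : τ → ∀ b, V b} {f : ∀ t, ι' t → ∀ b, V b} (hf : ∀ t, LinearIndependent ℚ (f t))
    (hdf : Pairwise (Disjoint on fun t => sectorOn univ (y t) (f t)))
    (hunion : (⋃ t, sectorOn univ (y t) (f t)) =
      Set.univ.pi fun b => ⋃ j, sectorOn univ (x b j) (E b j)) :
    ∑ t, sectorFrac (y t) (f t) =
      ∏ b, ∑ j, sectorFrac (Pi.single b (x b j)) (Pi.single b ∘ E b j) := by
  have hprod_disjoint : Pairwise (Disjoint on fun c : ∀ b, κ b => sectorOn univ
      (fun b => x b (c b)) fun σ : Σ b, ι b (c b) => Pi.single σ.1 (E σ.1 (c σ.1) σ.2)) := by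
    simpa only [univ_pi_sectorOn_univ] using pairwise_disjoint_univ_pi hd
  have hprod_union : (⋃ t, sectorOn univ (y t) (f t)) = ⋃ c : ∀ b, κ b, sectorOn univ
      (fun b => x b (c b)) fun σ : Σ b, ι b (c b) => Pi.single σ.1 (E σ.1 (c σ.1) σ.2) := by
    simp only [hunion, ← Set.iUnion_univ_pi, univ_pi_sectorOn_univ]
  rw [sum_sectorFrac_eq_of_iUnion_eq hf hdf
    (fun c => Pi.linearIndependent_single (ιs := fun b => ι b (c b)) (fun b => E b (c b))
      fun b => hE b (c b)) hprod_disjoint hprod_union, prod_univ_sum, Fintype.piFinset_univ]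
  refine sum_congr rfl fun c _ => ?_
  rw [prod_sectorFrac, univ_sum_single]
  rfl

end Product

theorem Sfrac_sum_prod_general
    (m : ℕ) (V : Fin m → Type*)
    [∀ i, AddCommGroup (V i)] [∀ i, Module ℚ (V i)]
    (φ : ∀ i, FractionRing (AddMonoidAlgebra ℚ (V i)) →+*
      FractionRing (AddMonoidAlgebra ℚ (∀ i, V i)))
    (hφ : ∀ i (v : V i),
      φ i (algebraMap (AddMonoidAlgebra ℚ (V i)) (FractionRing (AddMonoidAlgebra ℚ (V i)))
          (AddMonoidAlgebra.single v 1)) =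
        algebraMap (AddMonoidAlgebra ℚ (∀ i, V i)) (FractionRing (AddMonoidAlgebra ℚ (∀ i, V i)))
          (AddMonoidAlgebra.single (Pi.single i v) 1))
    (k : Fin m → ℕ) (x : ∀ i, Fin (k i) → V i) (n : ∀ i, Fin (k i) → ℕ)
    (e : ∀ i, ∀ j : Fin (k i), Fin (n i j) → V i)
    (he : ∀ i j, LinearIndependent ℚ (e i j))
    (hd : ∀ i, ∀ j j' : Fin (k i), j ≠ j' →
      Disjoint (simpleSector (x i j) (e i j)) (simpleSector (x i j') (e i j')))
    (K : ℕ) (y : Fin K → ∀ i, V i) (N : Fin K → ℕ)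
    (f : ∀ t : Fin K, Fin (N t) → ∀ i, V i)
    (hf : ∀ t, LinearIndependent ℚ (f t))
    (hdf : ∀ t t' : Fin K, t ≠ t' →
      Disjoint (simpleSector (y t) (f t)) (simpleSector (y t') (f t')))
    (hunion : (⋃ t, simpleSector (y t) (f t)) =
      Set.univ.pi (fun i => ⋃ j, simpleSector (x i j) (e i j))) :
    ∑ t, Sfrac (y t) (f t) = ∏ i, φ i (∑ j, Sfrac (x i j) (e i j)) := by
  simp only [simpleSector_eq_sectorOn] at hd hdf hunion
  rw [sum_congr rfl fun t _ => Sfrac_eq_sectorFrac (y t) (f t),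
    sum_sectorFrac_eq_prod_of_iUnion_eq_univ_pi he hd hf hdf hunion]
  refine prod_congr rfl fun i _ => ?_
  rw [map_sum]
  exact sum_congr rfl fun j _ => by
    rw [Sfrac_eq_sectorFrac, map_sectorFrac (φ i) (Pi.single i) (hφ i)]

/-- Fubini for the universal regularized sums: if each `Σᵢ ⊆ Vᵢ` is a finite
pairwise-disjoint union of simple sectors and the product `Σ₁ × ⋯ × Σ_m ⊆ V₁ × ⋯ × V_m`
is a finite pairwise-disjoint union of simple sectors, then the `S`-sum of the product
decomposition equals the product over `i` of the images, under the field embeddings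
`φᵢ : ℚ(Vᵢ) → ℚ(V₁ × ⋯ × V_m)` induced by the canonical inclusions, of the `S`-sums
of the factor decompositions. -/
theorem Sfrac_sum_prod
    (m : ℕ) (hm : 1 ≤ m) (V : Fin m → Type*)
    [∀ i, AddCommGroup (V i)] [∀ i, Module ℚ (V i)] [∀ i, FiniteDimensional ℚ (V i)]
    (φ : ∀ i, FractionRing (AddMonoidAlgebra ℚ (V i)) →+*
      FractionRing (AddMonoidAlgebra ℚ (∀ i, V i)))
    (hφ : ∀ i (v : V i),
      φ i (algebraMap (AddMonoidAlgebra ℚ (V i)) (FractionRing (AddMonoidAlgebra ℚ (V i)))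
          (AddMonoidAlgebra.single v 1)) =
        algebraMap (AddMonoidAlgebra ℚ (∀ i, V i)) (FractionRing (AddMonoidAlgebra ℚ (∀ i, V i)))
          (AddMonoidAlgebra.single (Pi.single i v) 1))
    (k : Fin m → ℕ) (x : ∀ i, Fin (k i) → V i) (n : ∀ i, Fin (k i) → ℕ)
    (e : ∀ i, ∀ j : Fin (k i), Fin (n i j) → V i)
    (he : ∀ i j, LinearIndependent ℚ (e i j))
    (hd : ∀ i, ∀ j j' : Fin (k i), j ≠ j' →
      Disjoint (simpleSector (x i j) (e i j)) (simpleSector (x i j') (e i j')))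
    (K : ℕ) (y : Fin K → ∀ i, V i) (N : Fin K → ℕ)
    (f : ∀ t : Fin K, Fin (N t) → ∀ i, V i)
    (hf : ∀ t, LinearIndependent ℚ (f t))
    (hdf : ∀ t t' : Fin K, t ≠ t' →
      Disjoint (simpleSector (y t) (f t)) (simpleSector (y t') (f t')))
    (hunion : (⋃ t, simpleSector (y t) (f t)) =
      Set.univ.pi (fun i => ⋃ j, simpleSector (x i j) (e i j))) :
    ∑ t, Sfrac (y t) (f t) = ∏ i, φ i (∑ j, Sfrac (x i j) (e i j)) :=
  Sfrac_sum_prod_general m V φ hφ k x n e he hd K y N f hf hdf hunion
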